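/- arXiv:1902.05261 — 3 statements merged into one kernel-verified Lean document; each statement's English description precedes it below -/
import Mathlib

section
/- Let f_X be a probability density on ℝ satisfying c_X(1+|x|)^{-β-2} ≤ f_X(x) ≤ C_X(1+|x|)^{-β-2} for all x ∈ ℝ with constants C_X > c_X > 0 and β > 0. If Z = arctan(X) where X has density f_X, then the density f_Z of Z satisfies c_Z · | |z| - π/2 |^β ≤ f_Z(z) ≤ C_Z · | |z| - π/2 |^β for all z ∈ (-π/2, π/2), for some constants C_Z ≥ c_Z > 0. -/
/-!
After the substitution `w = |z|`, the weight `(1 + |tan z|)^(-β-2) / cos² z` equals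
`cos^β w / (cos w + sin w)^(β+2)`. The denominator lies in `[1, 2]`, and
`cos w = sin (π/2 - w)` lies between `(2/π)(π/2 - w)` and `π/2 - w` (Jordan's inequality),
so the weight is comparable to `(π/2 - |z|)^β`. The density bounds on `f_X` transfer directly.
-/

open Real

lemma one_le_cos_add_sin {w : ℝ} (h0 : 0 ≤ w) (h1 : w ≤ π / 2) : 1 ≤ cos w + sin w := by
  have hc := cos_nonneg_of_neg_pi_div_two_le_of_le (by linarith [pi_pos]) h1
  have hs := sin_nonneg_of_nonneg_of_le_pi h0 (by linarith [pi_pos])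
  nlinarith [sin_sq_add_cos_sq w, mul_nonneg hs hc]

lemma one_add_tan_rpow_div_cos_sq {w : ℝ} (h0 : 0 ≤ w) (h1 : w < π / 2) (β : ℝ) :
    (1 + tan w) ^ (-β - 2) / cos w ^ 2 = cos w ^ β / (cos w + sin w) ^ (β + 2) := by
  have hc : 0 < cos w := cos_pos_of_mem_Ioo ⟨by linarith [pi_pos], h1⟩
  have hs : 0 < cos w + sin w := by linarith [one_le_cos_add_sin h0 h1.le]
  have h_one_add_tan : 1 + tan w = (cos w + sin w) / cos w := by
    rw [tan_eq_sin_div_cos]; field_simp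
  rw [h_one_add_tan, show -β - 2 = -(β + 2) by ring, rpow_neg (by positivity),
    div_rpow hs.le hc.le, rpow_add hc, rpow_two]
  field_simp

lemma one_add_tan_rpow_div_cos_sq_bounds {β w : ℝ} (hβ : 0 ≤ β) (h0 : 0 ≤ w) (h1 : w < π / 2) :
    (2 / π) ^ β / 2 ^ (β + 2) * (π / 2 - w) ^ β ≤ (1 + tan w) ^ (-β - 2) / cos w ^ 2 ∧
      (1 + tan w) ^ (-β - 2) / cos w ^ 2 ≤ (π / 2 - w) ^ β := by
  rw [one_add_tan_rpow_div_cos_sq h0 h1]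
  have hc : 0 < cos w := cos_pos_of_mem_Ioo ⟨by linarith [pi_pos], h1⟩
  have hcos_le : cos w ≤ π / 2 - w := by
    simpa [sin_pi_div_two_sub] using sin_le (x := π / 2 - w) (by linarith)
  have hle_cos : 2 / π * (π / 2 - w) ≤ cos w := by
    have := one_sub_mul_le_cos h0 h1.le
    have : 2 / π * (π / 2 - w) = 1 - 2 / π * w := by field_simp
    linarith
  have hs1 := one_le_cos_add_sin h0 h1.le
  have hs2 : cos w + sin w ≤ 2 := by linarith [cos_le_one w, sin_le_one w]
  constructor
  · calc (2 / π) ^ β / 2 ^ (β + 2) * (π / 2 - w) ^ β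
        = (2 / π * (π / 2 - w)) ^ β / 2 ^ (β + 2) := by
          rw [mul_rpow (by positivity) (by linarith)]; ring
      _ ≤ cos w ^ β / 2 ^ (β + 2) := by gcongr
      _ ≤ cos w ^ β / (cos w + sin w) ^ (β + 2) := by gcongr
  · calc cos w ^ β / (cos w + sin w) ^ (β + 2) ≤ cos w ^ β :=
          div_le_self (by positivity) (one_le_rpow hs1 (by linarith))
      _ ≤ (π / 2 - w) ^ β := by gcongr

lemma one_add_abs_tan_rpow_div_cos_sq_bounds {β z : ℝ} (hβ : 0 ≤ β)
    (hz : z ∈ Set.Ioo (-(π / 2)) (π / 2)) :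
    (2 / π) ^ β / 2 ^ (β + 2) * |(|z| - π / 2)| ^ β ≤ (1 + |tan z|) ^ (-β - 2) / cos z ^ 2 ∧
      (1 + |tan z|) ^ (-β - 2) / cos z ^ 2 ≤ |(|z| - π / 2)| ^ β := by
  have hw : |z| < π / 2 := abs_lt.2 hz
  have habs : |(|z| - π / 2)| = π / 2 - |z| := by
    rw [abs_sub_comm, abs_of_pos (by linarith)]
  have htan : |tan z| = tan |z| := by
    rw [← abs_of_nonneg (tan_nonneg_of_nonneg_of_le_pi_div_two (abs_nonneg z) hw.le)]
    rcases abs_choice z with h | h <;> simp [h, tan_neg]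
  rw [habs, htan, ← cos_abs z]
  exact one_add_tan_rpow_div_cos_sq_bounds hβ (abs_nonneg z) hw

theorem stmt0 (fX : ℝ → ℝ) (cX CX β : ℝ) (hβ : 0 < β) (hc : 0 < cX) (hcC : cX < CX)
    (hbound : ∀ x : ℝ, cX * (1 + |x|) ^ (-β - 2) ≤ fX x ∧ fX x ≤ CX * (1 + |x|) ^ (-β - 2)) :
    ∃ cZ CZ : ℝ, 0 < cZ ∧ cZ ≤ CZ ∧ ∀ z ∈ Set.Ioo (-(π/2)) (π/2),
      cZ * |(|z| - π/2)| ^ β ≤ fX (Real.tan z) / Real.cos z ^ 2 ∧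
      fX (Real.tan z) / Real.cos z ^ 2 ≤ CZ * |(|z| - π/2)| ^ β := by
  set κ := (2 / π) ^ β / 2 ^ (β + 2)
  have hκ_pos : 0 < κ := by positivity
  have hκ_le_one : κ ≤ 1 := by
    refine div_le_one_of_le₀ ?_ (by positivity)
    exact (rpow_le_one (by positivity) ((div_le_one pi_pos).2 two_le_pi) hβ.le).trans
      (one_le_rpow one_le_two (by linarith))
  refine ⟨cX * κ, CX, by positivity, by nlinarith, fun z hz => ?_⟩
  obtain ⟨hlo, hhi⟩ := one_add_abs_tan_rpow_div_cos_sq_bounds hβ.le hz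
  obtain ⟨hf_lo, hf_hi⟩ := hbound (tan z)
  have hcos : 0 < cos z ^ 2 := pow_pos (cos_pos_of_mem_Ioo hz) 2
  constructor
  · calc cX * κ * |(|z| - π / 2)| ^ β
        ≤ cX * ((1 + |tan z|) ^ (-β - 2) / cos z ^ 2) := by rw [mul_assoc]; gcongr
      _ ≤ fX (tan z) / cos z ^ 2 := by rw [← mul_div_assoc]; gcongr
  · calc fX (tan z) / cos z ^ 2
        ≤ CX * ((1 + |tan z|) ^ (-β - 2) / cos z ^ 2) := by rw [← mul_div_assoc]; gcongr
      _ ≤ CX * |(|z| - π / 2)| ^ β := by gcongr; linarith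
end

section
/- Let g(y) = ∫_ℝ f₀(α(y - a₁ X), β a₁) da₁ where f₀(u,v) = 1/(π²(1+u²)(1+v²)), α, β > 0 and X ∈ ℝ. Then αβ g(y) ≥ (1/(2π²)) · α/(1 + 2α²y² + 2X²α²/β²) for all y ∈ ℝ. -/
/-!
On `a₁ ∈ [0, 1/β]` we have `(β a₁)² ≤ 1` and, by `(p - q)² ≤ 2p² + 2q²`,
`(α (y - a₁ X))² ≤ 2α²y² + 2α²X²/β²`, so the integrand is at least `1 / (2π² D)` with
`D = 1 + 2α²y² + 2X²α²/β²`. The integrand is positive, so the integral over `ℝ` is at least the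
integral over this interval of length `1/β`, and multiplying by `αβ` gives the bound.
-/

open Real MeasureTheory Set

lemma const_mul_le_integral_of_le_on_Icc {f : ℝ → ℝ} {a b c : ℝ} (hab : a ≤ b)
    (hf : Integrable f) (hf_nonneg : 0 ≤ f) (hc : ∀ x ∈ Icc a b, c ≤ f x) :
    c * (b - a) ≤ ∫ x, f x := by
  calc c * (b - a) = ∫ _ in Icc a b, c := by simp [hab, mul_comm]
    _ ≤ ∫ x in Icc a b, f x :=
        setIntegral_mono_on (integrableOn_const (by simp)) hf.integrableOn measurableSet_Icc hc
    _ ≤ ∫ x, f x := setIntegral_le_integral hf (Filter.Eventually.of_forall hf_nonneg)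

lemma integrable_one_div_mul_one_add_sq_mul_one_add_sq {K β : ℝ} {u : ℝ → ℝ} (hK : 0 < K)
    (hβ : β ≠ 0) (hu : Continuous u) :
    Integrable fun a ↦ 1 / (K * (1 + u a ^ 2) * (1 + (β * a) ^ 2)) := by
  have hmaj : Integrable fun a : ℝ ↦ K⁻¹ * (1 + (β * a) ^ 2)⁻¹ :=
    (integrable_inv_one_add_sq.comp_mul_left' hβ).const_mul _
  refine hmaj.mono'
    (Continuous.div continuous_const (by fun_prop) fun a ↦ by positivity).aestronglyMeasurable
    (Filter.Eventually.of_forall fun a ↦ ?_)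
  rw [Real.norm_eq_abs, abs_of_pos (by positivity), one_div, mul_inv, mul_inv]
  gcongr
  exact mul_le_of_le_one_right (by positivity)
    (inv_le_one_of_one_le₀ (by nlinarith [sq_nonneg (u a)]))

lemma sq_mul_sub_mul_le {α β X y a : ℝ} (ha : a ∈ Icc 0 (1 / β)) :
    (α * (y - a * X)) ^ 2 ≤ 2 * α ^ 2 * y ^ 2 + 2 * X ^ 2 * α ^ 2 / β ^ 2 := by
  have ha_sq : a ^ 2 ≤ 1 / β ^ 2 := by
    simpa [div_pow] using pow_le_pow_left₀ ha.1 ha.2 2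
  have hsub : (y - a * X) ^ 2 ≤ 2 * y ^ 2 + 2 * (a ^ 2 * X ^ 2) := by
    nlinarith [sq_nonneg (y + a * X)]
  have hX : a ^ 2 * X ^ 2 ≤ X ^ 2 / β ^ 2 := by
    simpa [div_eq_mul_inv, mul_comm] using mul_le_mul_of_nonneg_left ha_sq (sq_nonneg X)
  calc (α * (y - a * X)) ^ 2 = α ^ 2 * (y - a * X) ^ 2 := by ring
    _ ≤ α ^ 2 * (2 * y ^ 2 + 2 * (X ^ 2 / β ^ 2)) := by gcongr; linarith
    _ = 2 * α ^ 2 * y ^ 2 + 2 * X ^ 2 * α ^ 2 / β ^ 2 := by ring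

lemma sq_mul_le_one {β a : ℝ} (hβ : 0 < β) (ha : a ∈ Icc 0 (1 / β)) : (β * a) ^ 2 ≤ 1 := by
  have h : β * a ≤ 1 := by
    calc β * a ≤ β * (1 / β) := by gcongr; exact ha.2
      _ = 1 := by field_simp
  nlinarith [mul_nonneg hβ.le ha.1]

lemma one_div_le_integrand_on_Icc {α β X y a : ℝ} (hβ : 0 < β) (ha : a ∈ Icc 0 (1 / β)) :
    1 / (2 * π ^ 2 * (1 + 2 * α ^ 2 * y ^ 2 + 2 * X ^ 2 * α ^ 2 / β ^ 2))
      ≤ 1 / (π ^ 2 * (1 + (α * (y - a * X)) ^ 2) * (1 + (β * a) ^ 2)) := by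
  have hu := sq_mul_sub_mul_le (α := α) (y := y) (X := X) ha
  have hv := sq_mul_le_one hβ ha
  refine one_div_le_one_div_of_le (by positivity) ?_
  calc π ^ 2 * (1 + (α * (y - a * X)) ^ 2) * (1 + (β * a) ^ 2)
      ≤ π ^ 2 * (1 + 2 * α ^ 2 * y ^ 2 + 2 * X ^ 2 * α ^ 2 / β ^ 2) * 2 := by
        gcongr π ^ 2 * ?_ * ?_ <;> linarith
    _ = 2 * π ^ 2 * (1 + 2 * α ^ 2 * y ^ 2 + 2 * X ^ 2 * α ^ 2 / β ^ 2) := by ring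

theorem stmt8 (α β X y : ℝ) (hα : 0 < α) (hβ : 0 < β) :
    (1/(2*π^2)) * (α / (1 + 2*α^2*y^2 + 2*X^2*α^2/β^2))
      ≤ α * β * ∫ a1 : ℝ, 1/(π^2 * (1 + (α*(y - a1*X))^2) * (1 + (β*a1)^2)) := by
  set D := 1 + 2*α^2*y^2 + 2*X^2*α^2/β^2
  have hint := integrable_one_div_mul_one_add_sq_mul_one_add_sq (pow_pos pi_pos 2) hβ.ne'
    (u := fun a1 ↦ α * (y - a1 * X)) (by fun_prop)
  have hbound : 1 / (2 * π ^ 2 * D) * (1 / β - 0)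
      ≤ ∫ a1 : ℝ, 1/(π^2 * (1 + (α*(y - a1*X))^2) * (1 + (β*a1)^2)) :=
    const_mul_le_integral_of_le_on_Icc (by positivity) hint (fun a1 ↦ by positivity)
      fun a1 ha1 ↦ one_div_le_integrand_on_Icc hβ ha1
  calc (1/(2*π^2)) * (α / D) = α * β * (1 / (2 * π ^ 2 * D) * (1 / β - 0)) := by
        rw [sub_zero]
        field_simp
    _ ≤ _ := by gcongr
end

section
/- Let Z₁,…,Z_n be i.i.d. with density f_Z on (-π/2,π/2) satisfying f_Z(z) ≥ c_Z||z|-π/2|^β with β > 0, c_Z > 0. Define L_n(δ) = min{Z_j : Z_j ≥ -π/2 + δ} if such Z_j exists, and L_n(δ) = -π/2 otherwise. Then for 0 < δ ≤ π/4, E[(L_n(δ) + π/2)²] ≤ 2(δ + 1/(c_Z n δ^β))² + π² exp(-c_Z n (π/2 - δ) δ^β). -/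
/-!
Write `W = leftMost n δ + π/2` and `c = c_Z n δ^β`. If some observation falls in
`[-π/2 + δ, t - π/2]` then `W ≤ t`; by the lower bound on the density this interval has mass at
least `c_Z δ^β (t - δ)`, so independence gives `P(W > t) ≤ exp(-c (t - δ))` for `δ ≤ t ≤ π/2`.
Since `0 ≤ W ≤ π` almost surely, the layer-cake formula `E[W²] = ∫₀^∞ 2t P(W > t) dt`, split at
`δ`, `π/2` and `π`, gives `E[W²] ≤ δ² + 2δ/c + 2/c² + (3π²/4) exp(-c (π/2 - δ))`.
-/

open Real MeasureTheory

/-- The leftmost observation at or above the cutoff `-π/2 + δ`, or `-π/2` if there is none. -/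
noncomputable def leftMost (n : ℕ) (δ : ℝ) (ω : Fin n → ℝ) : ℝ :=
  if h : (Finset.univ.filter fun j => -(π/2) + δ ≤ ω j).Nonempty then
    (Finset.univ.filter fun j => -(π/2) + δ ≤ ω j).inf' h ω
  else -(π/2)

open Set Filter

theorem Finset.measurable_inf' {ι α β : Type*} [MeasurableSpace α] [MeasurableSpace β]
    [SemilatticeInf β] [MeasurableInf₂ β] {s : Finset ι} (hs : s.Nonempty) {f : ι → α → β}
    (hf : ∀ i ∈ s, Measurable (f i)) : Measurable fun x => s.inf' hs fun i => f i x := by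
  simp_rw [← Finset.inf'_apply]
  exact Finset.inf'_induction hs _ (fun _ hf _ hg => hf.inf hg) hf

theorem lintegral_Ioc_ofReal_two_mul {a b : ℝ} (ha : 0 ≤ a) (hab : a ≤ b) :
    ∫⁻ t in Ioc a b, ENNReal.ofReal (2 * t) = ENNReal.ofReal (b ^ 2 - a ^ 2) := by
  rw [← ofReal_integral_eq_lintegral_ofReal
    (by fun_prop : Continuous fun t : ℝ => 2 * t).integrableOn_Ioc
    ((ae_restrict_iff' measurableSet_Ioc).2 (.of_forall fun t ht => by
      dsimp only [Pi.zero_apply]; linarith [ht.1])),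
    ← intervalIntegral.integral_of_le hab, intervalIntegral.integral_const_mul, integral_id]
  ring_nf

theorem integral_two_mul_mul_exp_le {a c δ : ℝ} (ha : 0 ≤ a) (hc : 0 < c) :
    ∫ t in δ..a, 2 * t * exp (-(c * (t - δ))) ≤ 2 * δ / c + 2 / c ^ 2 := by
  have hderiv : ∀ t ∈ uIcc δ a,
      HasDerivAt (fun t => -(2 / c * t + 2 / c ^ 2) * exp (-(c * (t - δ))))
        (2 * t * exp (-(c * (t - δ)))) t := by
    intro t _
    refine (((((hasDerivAt_id t).const_mul (2 / c)).add_const (2 / c ^ 2)).neg).mul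
      ((((hasDerivAt_id t).sub_const δ).const_mul c).neg.exp)).congr_deriv ?_
    simp only [Pi.neg_apply, id, mul_one]
    field_simp
    ring
  rw [intervalIntegral.integral_eq_sub_of_hasDerivAt hderiv
    ((by fun_prop : Continuous fun t => 2 * t * exp (-(c * (t - δ)))).intervalIntegrable _ _)]
  have : 0 ≤ (2 / c * a + 2 / c ^ 2) * exp (-(c * (a - δ))) := by positivity
  simp only [sub_self, mul_zero, neg_zero, exp_zero, mul_one, neg_mul]
  linarith [div_mul_eq_mul_div 2 c δ]

theorem lintegral_ofReal_sq_eq_lintegral_meas_lt_mul {Ω : Type*} [MeasurableSpace Ω]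
    {ν : Measure Ω} {W : Ω → ℝ} (hW0 : 0 ≤ᵐ[ν] W) (hW : AEMeasurable W ν) :
    ∫⁻ ω, ENNReal.ofReal (W ω ^ 2) ∂ν
      = ∫⁻ t in Ioi 0, ν {ω | t < W ω} * ENNReal.ofReal (2 * t) := by
  rw [← lintegral_comp_eq_lintegral_meas_lt_mul ν hW0 hW
    (fun t _ => (by fun_prop : Continuous fun t : ℝ => 2 * t).intervalIntegrable 0 t)
    ((ae_restrict_iff' measurableSet_Ioi).2 (.of_forall fun t ht => by
      linarith [mem_Ioi.1 ht]))]
  congr with ω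
  rw [intervalIntegral.integral_const_mul, integral_id]
  ring_nf

theorem setLIntegral_Ioc_meas_lt_mul_le_of_le_exp {Ω : Type*} [MeasurableSpace Ω]
    {ν : Measure Ω} {W : Ω → ℝ} {δ a c : ℝ} (hδ : 0 ≤ δ) (hδa : δ ≤ a) (hc : 0 < c)
    (htail : ∀ t ∈ Icc δ a, ν {ω | t < W ω} ≤ ENNReal.ofReal (exp (-(c * (t - δ))))) :
    ∫⁻ t in Ioc δ a, ν {ω | t < W ω} * ENNReal.ofReal (2 * t)
      ≤ ENNReal.ofReal (2 * δ / c + 2 / c ^ 2) := by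
  calc _ ≤ ∫⁻ t in Ioc δ a, ENNReal.ofReal (2 * t * exp (-(c * (t - δ)))) := by
        refine setLIntegral_mono' measurableSet_Ioc fun t ht => ?_
        rw [ENNReal.ofReal_mul (q := exp (-(c * (t - δ)))) (by linarith [ht.1]),
          mul_comm (ENNReal.ofReal (2 * t))]
        gcongr
        exact htail t (Ioc_subset_Icc_self ht)
    _ = ENNReal.ofReal (∫ t in δ..a, 2 * t * exp (-(c * (t - δ)))) := by
        rw [intervalIntegral.integral_of_le hδa, ofReal_integral_eq_lintegral_ofReal
          (by fun_prop : Continuous fun t => 2 * t * exp (-(c * (t - δ)))).integrableOn_Ioc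
          ((ae_restrict_iff' measurableSet_Ioc).2 (.of_forall fun t ht =>
            mul_nonneg (by linarith [ht.1]) (exp_nonneg _)))]
    _ ≤ _ := ENNReal.ofReal_le_ofReal (integral_two_mul_mul_exp_le (hδ.trans hδa) hc)

theorem lintegral_sq_le_of_meas_lt_le_exp {Ω : Type*} [MeasurableSpace Ω] {ν : Measure Ω}
    [IsProbabilityMeasure ν] {W : Ω → ℝ} (hW0 : 0 ≤ᵐ[ν] W) (hW : AEMeasurable W ν)
    {δ a b c : ℝ} (hδ : 0 ≤ δ) (hδa : δ ≤ a) (hab : a ≤ b) (hc : 0 < c)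
    (hWb : ∀ᵐ ω ∂ν, W ω ≤ b)
    (htail : ∀ t ∈ Icc δ a, ν {ω | t < W ω} ≤ ENNReal.ofReal (exp (-(c * (t - δ))))) :
    ∫⁻ ω, ENNReal.ofReal (W ω ^ 2) ∂ν ≤ ENNReal.ofReal (δ ^ 2)
      + ENNReal.ofReal (2 * δ / c + 2 / c ^ 2)
      + ENNReal.ofReal (exp (-(c * (a - δ)))) * ENNReal.ofReal (b ^ 2 - a ^ 2) := by
  have hlow : ∫⁻ t in Ioc 0 δ, ν {ω | t < W ω} * ENNReal.ofReal (2 * t)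
      ≤ ENNReal.ofReal (δ ^ 2) := by
    calc _ ≤ ∫⁻ t in Ioc 0 δ, ENNReal.ofReal (2 * t) :=
          lintegral_mono fun t => mul_le_of_le_one_left' prob_le_one
      _ = ENNReal.ofReal (δ ^ 2) := by
          rw [lintegral_Ioc_ofReal_two_mul le_rfl hδ]; ring_nf
  have hhigh : ∫⁻ t in Ioc a b, ν {ω | t < W ω} * ENNReal.ofReal (2 * t)
      ≤ ENNReal.ofReal (exp (-(c * (a - δ)))) * ENNReal.ofReal (b ^ 2 - a ^ 2) := by
    calc _ ≤ ∫⁻ t in Ioc a b,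
          ENNReal.ofReal (exp (-(c * (a - δ)))) * ENNReal.ofReal (2 * t) := by
          refine setLIntegral_mono' measurableSet_Ioc fun t ht => ?_
          gcongr
          exact (measure_mono fun ω (hω : t < W ω) => ht.1.trans hω).trans
            (htail a ⟨hδa, le_rfl⟩)
      _ = _ := by
          rw [lintegral_const_mul _ (by fun_prop),
            lintegral_Ioc_ofReal_two_mul (hδ.trans hδa) hab]
  have hbeyond : ∫⁻ t in Ioi b, ν {ω | t < W ω} * ENNReal.ofReal (2 * t) = 0 := by
    calc _ = ∫⁻ _ in Ioi b, 0 := setLIntegral_congr_fun measurableSet_Ioi fun t ht => by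
          rw [measure_mono_null (s := {ω | t < W ω})
            (fun ω hω => not_le.2 ((mem_Ioi.1 ht).trans hω)) (ae_iff.1 hWb), zero_mul]
      _ = 0 := lintegral_zero
  rw [lintegral_ofReal_sq_eq_lintegral_meas_lt_mul hW0 hW,
    ← Ioc_union_Ioi_eq_Ioi (hδ.trans (hδa.trans hab)),
    lintegral_union measurableSet_Ioi Ioc_disjoint_Ioi_same, hbeyond, add_zero,
    ← Ioc_union_Ioc_eq_Ioc (hδ.trans hδa) hab,
    lintegral_union measurableSet_Ioc (Ioc_disjoint_Ioc_of_le le_rfl),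
    ← Ioc_union_Ioc_eq_Ioc hδ hδa,
    lintegral_union measurableSet_Ioc (Ioc_disjoint_Ioc_of_le le_rfl)]
  gcongr
  exact setLIntegral_Ioc_meas_lt_mul_le_of_le_exp hδ hδa hc htail

theorem integral_sq_le_of_meas_lt_le_exp {Ω : Type*} [MeasurableSpace Ω] {ν : Measure Ω}
    [IsProbabilityMeasure ν] {W : Ω → ℝ} (hW0 : 0 ≤ᵐ[ν] W) (hW : AEMeasurable W ν)
    {δ a b c : ℝ} (hδ : 0 ≤ δ) (hδa : δ ≤ a) (hab : a ≤ b) (hc : 0 < c)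
    (hWb : ∀ᵐ ω ∂ν, W ω ≤ b)
    (htail : ∀ t ∈ Icc δ a, ν {ω | t < W ω} ≤ ENNReal.ofReal (exp (-(c * (t - δ))))) :
    ∫ ω, W ω ^ 2 ∂ν
      ≤ δ ^ 2 + (2 * δ / c + 2 / c ^ 2) + exp (-(c * (a - δ))) * (b ^ 2 - a ^ 2) := by
  have hba : 0 ≤ b ^ 2 - a ^ 2 := by nlinarith
  rw [integral_eq_lintegral_of_nonneg_ae (ae_of_all _ fun ω => sq_nonneg _)
    (hW.pow_const 2).aestronglyMeasurable]
  refine ENNReal.toReal_le_of_le_ofReal (by positivity) ?_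
  rw [ENNReal.ofReal_add (by positivity) (by positivity), ENNReal.ofReal_add (by positivity)
    (by positivity), ENNReal.ofReal_mul (exp_nonneg _)]
  exact lintegral_sq_le_of_meas_lt_le_exp hW0 hW hδ hδa hab hc hWb htail

theorem withDensity_apply_eq_zero_of_eqOn {α : Type*} [MeasurableSpace α] {ν : Measure α}
    {f : α → ENNReal} {s : Set α} (hs : MeasurableSet s) (hf : EqOn f 0 s) :
    ν.withDensity f s = 0 := by
  rw [withDensity_apply _ hs, setLIntegral_congr_fun hs hf, Pi.zero_def, lintegral_zero]

theorem ofReal_mul_sub_le_withDensity_Icc {f : ℝ → ℝ} {m a b : ℝ} (hm : 0 ≤ m)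
    (hf : ∀ x ∈ Icc a b, m ≤ f x) :
    ENNReal.ofReal (m * (b - a))
      ≤ volume.withDensity (fun x => ENNReal.ofReal (f x)) (Icc a b) := by
  rw [withDensity_apply _ measurableSet_Icc, ENNReal.ofReal_mul hm, ← Real.volume_Icc,
    ← setLIntegral_const]
  exact setLIntegral_mono' measurableSet_Icc fun x hx => ENNReal.ofReal_le_ofReal (hf x hx)

theorem MeasureTheory.Measure.pi_univ_pi_compl_le_exp {ι α : Type*} [Fintype ι]
    [MeasurableSpace α] {μ : Measure α} [IsProbabilityMeasure μ] {s : Set α}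
    (hs : MeasurableSet s) {p : ℝ} (hp : 0 ≤ p) (hμs : ENNReal.ofReal p ≤ μ s) :
    Measure.pi (fun _ : ι => μ) (univ.pi fun _ => sᶜ)
      ≤ ENNReal.ofReal (exp (-(Fintype.card ι * p))) := by
  rw [Measure.pi_pi, Finset.prod_const, Finset.card_univ, prob_compl_eq_one_sub hs]
  calc (1 - μ s) ^ Fintype.card ι ≤ ENNReal.ofReal (1 - p) ^ Fintype.card ι := by
        rw [ENNReal.ofReal_sub _ hp, ENNReal.ofReal_one]
        gcongr
    _ ≤ ENNReal.ofReal (exp (-p)) ^ Fintype.card ι := by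
        gcongr
        exact one_sub_le_exp_neg p
    _ = ENNReal.ofReal (exp (-(Fintype.card ι * p))) := by
        rw [← ENNReal.ofReal_pow (exp_nonneg _), ← exp_nat_mul, mul_neg]

theorem measurable_leftMost (n : ℕ) (δ : ℝ) : Measurable (leftMost n δ) := by
  classical
  -- `leftMost` factors through `ω` and its countably valued pattern of exceedances of the cutoff.
  let F : (Fin n → ℝ) × (Fin n → Prop) → ℝ := fun p =>
    if h : (Finset.univ.filter p.2).Nonempty then (Finset.univ.filter p.2).inf' h p.1 else -(π/2)
  have hF : Measurable F := measurable_from_prod_countable_left fun P => by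
    by_cases h : (Finset.univ.filter P).Nonempty
    · simpa only [F, dif_pos h] using Finset.measurable_inf' h fun j _ => measurable_pi_apply j
    · simp only [F, dif_neg h, measurable_const]
  have hcut : Measurable fun ω : Fin n → ℝ => fun j => -(π/2) + δ ≤ ω j :=
    measurable_pi_lambda _ fun j =>
      measurableSet_setOfPred.1 (measurableSet_Ici.preimage (measurable_pi_apply j))
  convert hF.comp (measurable_id.prodMk hcut) using 1
  funext ω
  simp only [leftMost, F, Function.comp, id]

theorem neg_pi_div_two_le_leftMost {n : ℕ} {δ : ℝ} (hδ : 0 ≤ δ) (ω : Fin n → ℝ) :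
    -(π/2) ≤ leftMost n δ ω := by
  unfold leftMost
  split_ifs with h
  · exact le_trans (by linarith) (Finset.le_inf' h _ fun j hj => (Finset.mem_filter.1 hj).2)
  · exact le_rfl

theorem leftMost_le_of_le {n : ℕ} {δ : ℝ} {ω : Fin n → ℝ} {j : Fin n} (hj : -(π/2) + δ ≤ ω j) :
    leftMost n δ ω ≤ ω j := by
  have hmem : j ∈ Finset.univ.filter fun j => -(π/2) + δ ≤ ω j := by simpa using hj
  rw [leftMost, dif_pos ⟨j, hmem⟩]
  exact Finset.inf'_le ω hmem

theorem leftMost_le_of_forall_le {n : ℕ} {δ x : ℝ} {ω : Fin n → ℝ} (hx : -(π/2) ≤ x)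
    (hω : ∀ j, ω j ≤ x) : leftMost n δ ω ≤ x := by
  unfold leftMost
  split_ifs with h
  · obtain ⟨j, hj⟩ := h
    exact (Finset.inf'_le ω hj).trans (hω j)
  · exact hx

theorem measure_lt_leftMost_add_le {n : ℕ} {δ t p : ℝ} {μ : Measure ℝ} [IsProbabilityMeasure μ]
    (hp : 0 ≤ p) (hμ : ENNReal.ofReal p ≤ μ (Icc (-(π/2) + δ) (t - π/2))) :
    Measure.pi (fun _ : Fin n => μ) {ω | t < leftMost n δ ω + π/2}
      ≤ ENNReal.ofReal (exp (-(n * p))) := by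
  have hsub : {ω | t < leftMost n δ ω + π/2}
      ⊆ univ.pi fun _ => (Icc (-(π/2) + δ) (t - π/2))ᶜ := fun ω hω j _ hj => by
    have := leftMost_le_of_le hj.1
    linarith [hj.2, show t < leftMost n δ ω + π/2 from hω]
  simpa using (measure_mono hsub).trans (Measure.pi_univ_pi_compl_le_exp measurableSet_Icc hp hμ)

theorem ae_leftMost_add_le_pi {n : ℕ} {δ : ℝ} {μ : Measure ℝ} [SigmaFinite μ]
    (hμ : μ (Ioi (π/2)) = 0) :
    ∀ᵐ ω ∂(Measure.pi fun _ : Fin n => μ), leftMost n δ ω + π/2 ≤ π := by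
  have hle : ∀ᵐ z ∂μ, z ≤ π/2 :=
    (measure_eq_zero_iff_ae_notMem.1 hμ).mono fun _ hz => le_of_not_gt hz
  filter_upwards [ae_all_iff.2 fun j => Measure.tendsto_eval_ae_ae (i := j) hle] with ω hω
  linarith [leftMost_le_of_forall_le (δ := δ) (by linarith [pi_pos]) hω]

theorem mul_rpow_le_of_mem_Icc {fZ : ℝ → ℝ} {cZ β δ x : ℝ} (hcZ : 0 ≤ cZ) (hβ : 0 ≤ β)
    (hδ : 0 < δ) (hlow : ∀ z ∈ Ioo (-(π/2)) (π/2), cZ * |(|z| - π/2)| ^ β ≤ fZ z)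
    (hx : x ∈ Icc (-(π/2) + δ) 0) : cZ * δ ^ β ≤ fZ x := by
  refine le_trans ?_ (hlow x ⟨by linarith [hx.1], by linarith [hx.2, pi_pos]⟩)
  rw [abs_of_nonpos hx.2, abs_of_nonpos (by linarith [hx.1])]
  gcongr
  linarith [hx.1]

theorem stmt12 (n : ℕ) (hn : 1 ≤ n) (fZ : ℝ → ℝ) (cZ β δ : ℝ)
    (hcZ : 0 < cZ) (hβ : 0 < β) (hδ : 0 < δ) (hδ' : δ ≤ π/4)
    (μ : Measure ℝ) (hμ : μ = volume.withDensity (fun z => ENNReal.ofReal (fZ z)))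
    (hprob : IsProbabilityMeasure μ)
    (hsupp : ∀ z : ℝ, z ∉ Set.Ioo (-(π/2)) (π/2) → fZ z = 0)
    (hlow : ∀ z ∈ Set.Ioo (-(π/2)) (π/2), cZ * |(|z| - π/2)| ^ β ≤ fZ z) :
    (∫ ω : Fin n → ℝ, (leftMost n δ ω + π/2)^2 ∂(Measure.pi fun _ : Fin n => μ))
      ≤ 2 * (δ + 1/(cZ * n * δ ^ β))^2
        + π^2 * Real.exp (-(cZ * n * (π/2 - δ) * δ ^ β)) := by
  have hπ := pi_pos
  have hc : 0 < cZ * n * δ ^ β := by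
    have : (0 : ℝ) < n := by exact_mod_cast hn
    positivity
  have hnull : μ (Ioi (π/2)) = 0 := hμ ▸ withDensity_apply_eq_zero_of_eqOn measurableSet_Ioi
    fun z hz => by simp [hsupp z fun h => (mem_Ioi.1 hz).not_gt h.2]
  have htail : ∀ t ∈ Icc δ (π/2), Measure.pi (fun _ : Fin n => μ) {ω | t < leftMost n δ ω + π/2}
      ≤ ENNReal.ofReal (exp (-(cZ * n * δ ^ β * (t - δ)))) := fun t ht => by
    have hmass : ENNReal.ofReal (cZ * δ ^ β * (t - δ)) ≤ μ (Icc (-(π/2) + δ) (t - π/2)) := by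
      rw [hμ]
      convert ofReal_mul_sub_le_withDensity_Icc (b := t - π/2) (by positivity) fun x hx =>
        mul_rpow_le_of_mem_Icc hcZ.le hβ.le hδ hlow ⟨hx.1, by linarith [hx.2, ht.2]⟩ using 2
      ring
    convert measure_lt_leftMost_add_le (mul_nonneg (by positivity) (by linarith [ht.1])) hmass
      using 3
    ring
  have hbound := integral_sq_le_of_meas_lt_le_exp
    (ae_of_all _ fun ω => show (0 : ℝ) ≤ _ by linarith [neg_pi_div_two_le_leftMost hδ.le ω])
    ((measurable_leftMost n δ).add_const _).aemeasurable hδ.le (by linarith) (by linarith) hc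
    (ae_leftMost_add_le_pi hnull) htail
  rw [show cZ * n * (π/2 - δ) * δ ^ β = cZ * n * δ ^ β * (π/2 - δ) by ring]
  set c := cZ * n * δ ^ β
  set E := exp (-(c * (π/2 - δ)))
  have hgap : 2 * (δ + 1 / c) ^ 2 + π ^ 2 * E
      - (δ ^ 2 + (2 * δ / c + 2 / c ^ 2) + E * (π ^ 2 - (π / 2) ^ 2))
      = δ ^ 2 + 2 * δ / c + π ^ 2 / 4 * E := by
    field_simp
    ring
  exact hbound.trans (sub_nonneg.1 (hgap ▸ by positivity))
end
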